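/- arXiv:1202.0973 — 2 statements merged into one kernel-verified Lean document; each statement's English description precedes it below -/
import Mathlib

section
/- Submodularity of the s-perimeter: for measurable sets E, F ⊆ ℝ^n and an open set Ω, Per_s(E ∩ F, Ω) + Per_s(E ∪ F, Ω) ≤ Per_s(E, Ω) + Per_s(F, Ω), provided the right-hand side is finite. -/
/-!
The fractional perimeter `Per_s(E, Ω)` is the cut functional `E ↦ ∫_E ∫_{Eᶜ} k` of the kernel
`k(x, y) = |x - y|^{-(n+s)}` restricted to pairs `(x, y)` with `x ∈ Ω` or `y ∈ Ω`, and every cut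
functional of a nonnegative kernel is submodular. Pointwise in `x`, with `ν = k(x, ·) dy`:
if `x ∈ E ∩ F` the inequality is the modularity `ν(Eᶜ ∪ Fᶜ) + ν(Eᶜ ∩ Fᶜ) = ν(Eᶜ) + ν(Fᶜ)`,
if `x` lies in exactly one of `E`, `F` it is the monotonicity of `ν`; integrating in `x` gives
the claim.
-/

open MeasureTheory

/-- The interaction energy `L(A,B) = ∫_A ∫_B |x-y|^{-(n+s)} dx dy`. -/
noncomputable def interL (n : ℕ) (s : ℝ) (A B : Set (EuclideanSpace ℝ (Fin n))) : ENNReal :=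
  ∫⁻ x in A, ∫⁻ y in B, ENNReal.ofReal (1 / ‖x - y‖ ^ ((n : ℝ) + s))

/-- The fractional `s`-perimeter `Per_s(E, Ω) = L(E ∩ Ω, ℝⁿ \ E) + L(E \ Ω, Ω \ E)`. -/
noncomputable def fracPer (n : ℕ) (s : ℝ) (E Ω : Set (EuclideanSpace ℝ (Fin n))) : ENNReal :=
  interL n s (E ∩ Ω) Eᶜ + interL n s (E \ Ω) (Ω \ E)

open scoped ENNReal

namespace MeasureTheory

variable {α : Type*} [MeasurableSpace α]

theorem indicator_measure_compl_inter_add_union_le (ν : α → Measure α) {E F : Set α}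
    (hF : MeasurableSet F) (x : α) :
    (E ∩ F).indicator (fun x ↦ ν x (E ∩ F)ᶜ) x + (E ∪ F).indicator (fun x ↦ ν x (E ∪ F)ᶜ) x ≤
      E.indicator (fun x ↦ ν x Eᶜ) x + F.indicator (fun x ↦ ν x Fᶜ) x := by
  by_cases hxE : x ∈ E <;> by_cases hxF : x ∈ F <;>
    simp only [Set.mem_inter_iff, Set.mem_union, hxE, hxF, and_self, and_true, and_false, or_self,
      or_true, or_false, not_false_eq_true, Set.indicator_of_mem, Set.indicator_of_notMem,
      Set.compl_inter, Set.compl_union, zero_add, add_zero, le_refl]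
  · exact (measure_union_add_inter _ hF.compl).le
  · exact measure_mono Set.inter_subset_left
  · exact measure_mono Set.inter_subset_right

noncomputable def kernelCut (μ : Measure α) (k : α → α → ℝ≥0∞) (E : Set α) : ℝ≥0∞ :=
  ∫⁻ x in E, ∫⁻ y in Eᶜ, k x y ∂μ ∂μ

open Classical in
noncomputable def localizedKernel (k : α → α → ℝ≥0∞) (Ω : Set α) (x y : α) : ℝ≥0∞ :=
  if x ∈ Ω ∨ y ∈ Ω then k x y else 0

variable {μ : Measure α} {k : α → α → ℝ≥0∞}

theorem measurable_uncurry_localizedKernel (hk : Measurable (Function.uncurry k)) {Ω : Set α}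
    (hΩ : MeasurableSet Ω) : Measurable (Function.uncurry (localizedKernel k Ω)) := by
  classical
  exact Measurable.ite ((measurable_fst hΩ).union (measurable_snd hΩ)) hk measurable_const

theorem kernelCut_localizedKernel {E Ω : Set α} (hE : MeasurableSet E) (hΩ : MeasurableSet Ω) :
    kernelCut μ (localizedKernel k Ω) E =
      (∫⁻ x in E ∩ Ω, ∫⁻ y in Eᶜ, k x y ∂μ ∂μ) + ∫⁻ x in E \ Ω, ∫⁻ y in Ω \ E, k x y ∂μ ∂μ := by
  rw [kernelCut, ← lintegral_inter_add_sdiff _ E hΩ]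
  congr 1
  · refine setLIntegral_congr_fun (hE.inter hΩ) fun x hx ↦ ?_
    simp only [localizedKernel, hx.2, true_or, if_true]
  · refine setLIntegral_congr_fun (hE.diff hΩ) fun x hx ↦ ?_
    have h : localizedKernel k Ω x = Ω.indicator (k x) := by
      ext y
      by_cases hy : y ∈ Ω <;> simp [localizedKernel, hx.2, hy]
    rw [h, setLIntegral_indicator hΩ]
    rfl

variable [SFinite μ]

theorem kernelCut_eq_lintegral_indicator {E : Set α} (hE : MeasurableSet E) :
    kernelCut μ k E = ∫⁻ x, E.indicator (fun x ↦ μ.withDensity (k x) Eᶜ) x ∂μ := by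
  simp only [kernelCut, lintegral_indicator hE, withDensity_apply']

theorem kernelCut_inter_add_union_le (hk : Measurable (Function.uncurry k)) {E F : Set α}
    (hE : MeasurableSet E) (hF : MeasurableSet F) :
    kernelCut μ k (E ∩ F) + kernelCut μ k (E ∪ F) ≤ kernelCut μ k E + kernelCut μ k F := by
  have hmeas : ∀ A B : Set α, MeasurableSet A →
      Measurable (A.indicator fun x ↦ μ.withDensity (k x) B) := fun A B hA ↦ by
    simp only [withDensity_apply']
    exact hk.lintegral_prod_right.indicator hA
  simp only [kernelCut_eq_lintegral_indicator, hE, hF, hE.inter hF, hE.union hF]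
  rw [← lintegral_add_left (hmeas _ _ (hE.inter hF)), ← lintegral_add_left (hmeas _ _ hE)]
  exact lintegral_mono (indicator_measure_compl_inter_add_union_le _ hF)

end MeasureTheory

theorem fracPer_eq_kernelCut (n : ℕ) (s : ℝ) {E Ω : Set (EuclideanSpace ℝ (Fin n))}
    (hE : MeasurableSet E) (hΩ : MeasurableSet Ω) :
    fracPer n s E Ω = kernelCut volume
      (localizedKernel (fun x y ↦ ENNReal.ofReal (1 / ‖x - y‖ ^ ((n : ℝ) + s))) Ω) E :=
  (kernelCut_localizedKernel hE hΩ).symm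

theorem stmt_12_general (n : ℕ) (s : ℝ)
    (Ω : Set (EuclideanSpace ℝ (Fin n))) (hΩ : IsOpen Ω)
    (E F : Set (EuclideanSpace ℝ (Fin n))) (hE : MeasurableSet E) (hF : MeasurableSet F) :
    fracPer n s (E ∩ F) Ω + fracPer n s (E ∪ F) Ω ≤ fracPer n s E Ω + fracPer n s F Ω := by
  simp only [fracPer_eq_kernelCut n s _ hΩ.measurableSet, hE, hF, hE.inter hF, hE.union hF]
  exact kernelCut_inter_add_union_le
    (measurable_uncurry_localizedKernel (by fun_prop) hΩ.measurableSet) hE hF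

/-- submodularity of the fractional `s`-perimeter. -/
theorem stmt_12 (n : ℕ) (s : ℝ) (hs : s ∈ Set.Ioo (0 : ℝ) 1)
    (Ω : Set (EuclideanSpace ℝ (Fin n))) (hΩ : IsOpen Ω)
    (E F : Set (EuclideanSpace ℝ (Fin n))) (hE : MeasurableSet E) (hF : MeasurableSet F)
    (hfin : fracPer n s E Ω + fracPer n s F Ω ≠ ⊤) :
    fracPer n s (E ∩ F) Ω + fracPer n s (E ∪ F) Ω ≤ fracPer n s E Ω + fracPer n s F Ω :=
  stmt_12_general n s Ω hΩ E F hE hF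
end

section
/- Let u be homogeneous of degree zero on ℝ^{n+1}_+ with finite weighted energy on every half-ball, and define the perturbed functions u_R^± as above. Then |E_R(u_R^+) + E_R(u_R^-) - 2E_R(u)| ≤ C R^{n-3+a} for a constant C ≥ 0 depending on φ and u. -/
open MeasureTheory

/-- Horizontal perturbation map `Y(X) = X + σ φ(X/R) e₁`. -/
noncomputable def pertMap (n : ℕ) (φ : EuclideanSpace ℝ (Fin (n + 1)) → ℝ) (σ R : ℝ)
    (X : EuclideanSpace ℝ (Fin (n + 1))) : EuclideanSpace ℝ (Fin (n + 1)) :=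
  X + (σ * φ (R⁻¹ • X)) • (EuclideanSpace.single 0 1 : EuclideanSpace ℝ (Fin (n + 1)))

/-- The perturbed function `u_R^σ`, defined by `u_R^σ(Y(X)) = u(X)`. -/
noncomputable def pertFun (n : ℕ) (φ : EuclideanSpace ℝ (Fin (n + 1)) → ℝ) (σ R : ℝ)
    (u : EuclideanSpace ℝ (Fin (n + 1)) → ℝ) : EuclideanSpace ℝ (Fin (n + 1)) → ℝ :=
  u ∘ Function.invFun (pertMap n φ σ R)

/-- The weighted Dirichlet energy `E_R(v) = ∫_{B_R^+} |∇v|² x_{n+1}^a dX`. -/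
noncomputable def wEnergy (n : ℕ) (a : ℝ) (v : EuclideanSpace ℝ (Fin (n + 1)) → ℝ) (R : ℝ) :
    ENNReal :=
  ∫⁻ X in {X : EuclideanSpace ℝ (Fin (n + 1)) | ‖X‖ < R ∧ 0 < X (Fin.last n)},
    ENNReal.ofReal (‖gradient v X‖ ^ 2 * (X (Fin.last n)) ^ a)


open MeasureTheory InnerProductSpace
open scoped InnerProductSpace ENNReal NNReal

noncomputable section AuxStmt14

abbrev ES (n : ℕ) := EuclideanSpace ℝ (Fin (n+1))

def eo (n : ℕ) : ES n := EuclideanSpace.single 0 1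

def psiD (n : ℕ) (φ : ES n → ℝ) (R : ℝ) (X : ES n) : ES n →L[ℝ] ℝ :=
  fderiv ℝ (fun Y => φ (R⁻¹ • Y)) X

def qf (n : ℕ) (φ : ES n → ℝ) (R : ℝ) (X : ES n) : ℝ := psiD n φ R X (eo n)

def Wv (n : ℕ) (φ : ES n → ℝ) (R : ℝ) (X : ES n) : ES n :=
  (toDual ℝ (ES n)).symm (psiD n φ R X)

lemma eo_norm (n : ℕ) : ‖eo n‖ = 1 := by
  simp [eo, EuclideanSpace.norm_single]

lemma eo_last (n : ℕ) (hn : n ≠ 0) : eo n (Fin.last n) = 0 := by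
  rw [eo, EuclideanSpace.single_apply, if_neg]
  intro h
  exact hn (by simpa [Fin.ext_iff] using h)

lemma inner_Wv (n : ℕ) (φ : ES n → ℝ) (R : ℝ) (X v : ES n) :
    ⟪Wv n φ R X, v⟫_ℝ = psiD n φ R X v := by
  simp [Wv, InnerProductSpace.toDual_symm_apply]

lemma Wv_norm (n : ℕ) (φ : ES n → ℝ) (R : ℝ) (X : ES n) : ‖Wv n φ R X‖ = ‖psiD n φ R X‖ :=
  LinearIsometryEquiv.norm_map _ _

lemma qf_abs_le (n : ℕ) (φ : ES n → ℝ) (R : ℝ) (X : ES n) : |qf n φ R X| ≤ ‖psiD n φ R X‖ := by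
  calc |qf n φ R X| ≤ ‖psiD n φ R X‖ * ‖eo n‖ := (psiD n φ R X).le_opNorm (eo n)
  _ = ‖psiD n φ R X‖ := by rw [eo_norm, mul_one]

lemma hasFDerivAt_psi (n : ℕ) (φ : ES n → ℝ) (hφ : ContDiff ℝ (⊤ : ℕ∞) φ) (R : ℝ) (X : ES n) :
    HasFDerivAt (fun Y : ES n => φ (R⁻¹ • Y)) (psiD n φ R X) X := by
  have h : DifferentiableAt ℝ (fun Y : ES n => φ (R⁻¹ • Y)) X :=
    ((hφ.differentiable (by simp)).differentiableAt).comp X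
      ((differentiable_id.const_smul R⁻¹).differentiableAt)
  exact h.hasFDerivAt

lemma psiD_eq (n : ℕ) (φ : ES n → ℝ) (hφ : ContDiff ℝ (⊤ : ℕ∞) φ) (R : ℝ) (X : ES n) :
    psiD n φ R X = R⁻¹ • fderiv ℝ φ (R⁻¹ • X) := by
  have h1 : HasFDerivAt (fun Y : ES n => R⁻¹ • Y)
      (R⁻¹ • ContinuousLinearMap.id ℝ (ES n)) X := by
    exact (R⁻¹ • ContinuousLinearMap.id ℝ (ES n)).hasFDerivAt (x := X)
  have h2 : HasFDerivAt φ (fderiv ℝ φ (R⁻¹ • X)) (R⁻¹ • X) :=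
    ((hφ.differentiable (by simp)) _).hasFDerivAt
  have h3 := h2.comp X h1
  have h4 : (fderiv ℝ φ (R⁻¹ • X)).comp (R⁻¹ • ContinuousLinearMap.id ℝ (ES n))
      = R⁻¹ • fderiv ℝ φ (R⁻¹ • X) := by
    ext v; simp
  rw [h4] at h3
  exact h3.fderiv

lemma psiD_norm_le (n : ℕ) (φ : ES n → ℝ) (hφ : ContDiff ℝ (⊤ : ℕ∞) φ) (K : ℝ≥0)
    (hK : LipschitzWith K φ) (R : ℝ) (hR : 0 < R) (X : ES n) :
    ‖psiD n φ R X‖ ≤ K / R := by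
  rw [psiD_eq n φ hφ R X, norm_smul R⁻¹ (fderiv ℝ φ (R⁻¹ • X))]
  have := norm_fderiv_le_of_lipschitz ℝ hK (x₀ := R⁻¹ • X)
  calc ‖R⁻¹‖ * ‖fderiv ℝ φ (R⁻¹ • X)‖ ≤ ‖R⁻¹‖ * K := by
        exact mul_le_mul_of_nonneg_left this (norm_nonneg _)
  _ = K / R := by
        rw [Real.norm_eq_abs, abs_of_pos (inv_pos.2 hR)]; ring

lemma psiD_zero_lower (n : ℕ) (φ : ES n → ℝ) (R : ℝ) (hR : 0 < R)
    (hφ1 : ∀ x : ES n, ‖x‖ ≤ 1 / 2 → φ x = 1) (X : ES n) (h : ‖X‖ < R/2) :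
    psiD n φ R X = 0 := by
  have hev : (fun Y : ES n => φ (R⁻¹ • Y)) =ᶠ[nhds X] fun _ => (1 : ℝ) := by
    have hopen : IsOpen {Y : ES n | ‖Y‖ < R/2} := isOpen_lt continuous_norm continuous_const
    filter_upwards [hopen.mem_nhds h] with Y hY
    apply hφ1
    rw [norm_smul, Real.norm_eq_abs, abs_of_pos (inv_pos.2 hR)]
    rw [inv_mul_le_iff₀ hR]
    linarith
  rw [psiD, hev.fderiv_eq, fderiv_const_apply]

lemma psiD_zero_upper (n : ℕ) (φ : ES n → ℝ) (R : ℝ) (hR : 0 < R)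
    (hφ0 : ∀ x : ES n, 3 / 4 ≤ ‖x‖ → φ x = 0) (X : ES n) (h : 3*R/4 < ‖X‖) :
    psiD n φ R X = 0 := by
  have hev : (fun Y : ES n => φ (R⁻¹ • Y)) =ᶠ[nhds X] fun _ => (0 : ℝ) := by
    have hopen : IsOpen {Y : ES n | 3*R/4 < ‖Y‖} := isOpen_lt continuous_const continuous_norm
    filter_upwards [hopen.mem_nhds h] with Y hY
    apply hφ0
    rw [norm_smul, Real.norm_eq_abs, abs_of_pos (inv_pos.2 hR)]
    rw [le_inv_mul_iff₀ hR]
    linarith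
  rw [psiD, hev.fderiv_eq, fderiv_const_apply]

end AuxStmt14
section Part2
open MeasureTheory InnerProductSpace
open scoped InnerProductSpace ENNReal NNReal

noncomputable section AuxStmt14b

lemma pertMap_def (n : ℕ) (φ : ES n → ℝ) (σ R : ℝ) (X : ES n) :
    pertMap n φ σ R X = X + (σ * φ (R⁻¹ • X)) • eo n := rfl

lemma pertMap_last (n : ℕ) (hn : n ≠ 0) (φ : ES n → ℝ) (σ R : ℝ) (X : ES n) :
    pertMap n φ σ R X (Fin.last n) = X (Fin.last n) := by
  have : pertMap n φ σ R X (Fin.last n)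
      = X (Fin.last n) + (σ * φ (R⁻¹ • X)) * eo n (Fin.last n) := rfl
  rw [this, eo_last n hn, mul_zero, add_zero]

lemma pertMap_eq_self (n : ℕ) (φ : ES n → ℝ) (hφ0 : ∀ x : ES n, 3 / 4 ≤ ‖x‖ → φ x = 0)
    (σ R : ℝ) (hR : 0 < R) (X : ES n) (h : 3*R/4 ≤ ‖X‖) :
    pertMap n φ σ R X = X := by
  have h0 : φ (R⁻¹ • X) = 0 := by
    apply hφ0
    rw [norm_smul, Real.norm_eq_abs, abs_of_pos (inv_pos.2 hR), le_inv_mul_iff₀ hR]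
    linarith
  rw [pertMap_def, h0, mul_zero, zero_smul, add_zero]

lemma pertMap_dist (n : ℕ) (φ : ES n → ℝ) (K : ℝ≥0) (hK : LipschitzWith K φ)
    (σ R : ℝ) (hσ : |σ| ≤ 1) (hR : 2 * K ≤ R) (hR0 : 0 < R) (X Y : ES n) :
    ‖X - Y‖ / 2 ≤ ‖pertMap n φ σ R X - pertMap n φ σ R Y‖ := by
  have hφd : |φ (R⁻¹ • X) - φ (R⁻¹ • Y)| ≤ K / R * ‖X - Y‖ := by
    have := hK.dist_le_mul (R⁻¹ • X) (R⁻¹ • Y)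
    rw [Real.dist_eq, dist_eq_norm, ← smul_sub, norm_smul, Real.norm_eq_abs,
      abs_of_pos (inv_pos.2 hR0)] at this
    calc |φ (R⁻¹ • X) - φ (R⁻¹ • Y)| ≤ K * (R⁻¹ * ‖X - Y‖) := this
    _ = K / R * ‖X - Y‖ := by ring
  have hKR : (K : ℝ) / R ≤ 1 / 2 := by
    rw [div_le_div_iff₀ hR0 (by norm_num)]
    linarith
  have key : pertMap n φ σ R X - pertMap n φ σ R Y
      = (X - Y) + (σ * φ (R⁻¹ • X) - σ * φ (R⁻¹ • Y)) • eo n := by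
    rw [pertMap_def, pertMap_def, sub_smul]; abel
  rw [key]
  have h2 : ‖(σ * φ (R⁻¹ • X) - σ * φ (R⁻¹ • Y)) • eo n‖ ≤ ‖X - Y‖ / 2 := by
    rw [norm_smul, eo_norm, mul_one, Real.norm_eq_abs, ← mul_sub, abs_mul]
    have h3 : |σ| * |φ (R⁻¹ • X) - φ (R⁻¹ • Y)| ≤ 1 * (K / R * ‖X - Y‖) := by
      apply mul_le_mul hσ hφd (abs_nonneg _) zero_le_one
    have h4 : (K : ℝ) / R * ‖X - Y‖ ≤ 1/2 * ‖X - Y‖ :=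
      mul_le_mul_of_nonneg_right hKR (norm_nonneg _)
    calc |σ| * |φ (R⁻¹ • X) - φ (R⁻¹ • Y)| ≤ K / R * ‖X - Y‖ := by linarith
    _ ≤ ‖X - Y‖ / 2 := by linarith
  calc ‖X - Y‖ / 2 = ‖X - Y‖ - ‖X - Y‖ / 2 := by ring
  _ ≤ ‖X - Y‖ - ‖(σ * φ (R⁻¹ • X) - σ * φ (R⁻¹ • Y)) • eo n‖ := by linarith
  _ ≤ ‖(X - Y) + (σ * φ (R⁻¹ • X) - σ * φ (R⁻¹ • Y)) • eo n‖ := by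
      have hh : ‖X - Y‖ ≤ ‖(X - Y) + (σ * φ (R⁻¹ • X) - σ * φ (R⁻¹ • Y)) • eo n‖
          + ‖(σ * φ (R⁻¹ • X) - σ * φ (R⁻¹ • Y)) • eo n‖ := by
        calc ‖X - Y‖ = ‖(X - Y) + (σ * φ (R⁻¹ • X) - σ * φ (R⁻¹ • Y)) • eo n
            - (σ * φ (R⁻¹ • X) - σ * φ (R⁻¹ • Y)) • eo n‖ := by abel_nf
        _ ≤ _ := norm_sub_le _ _
      linarith
  
lemma pertMap_injective (n : ℕ) (φ : ES n → ℝ) (K : ℝ≥0) (hK : LipschitzWith K φ)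
    (σ R : ℝ) (hσ : |σ| ≤ 1) (hR : 2 * K ≤ R) (hR0 : 0 < R) :
    Function.Injective (pertMap n φ σ R) := by
  intro X Y h
  have := pertMap_dist n φ K hK σ R hσ hR hR0 X Y
  rw [h, sub_self, norm_zero] at this
  have : ‖X - Y‖ ≤ 0 := by linarith
  rwa [norm_le_zero_iff, sub_eq_zero] at this

lemma pertMap_surjective (n : ℕ) (φ : ES n → ℝ) (K : ℝ≥0) (hK : LipschitzWith K φ)
    (σ R : ℝ) (hσ : |σ| ≤ 1) (hR : 2 * K ≤ R) (hR0 : 0 < R) :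
    Function.Surjective (pertMap n φ σ R) := by
  intro z
  set Φ : ES n → ES n := fun X => z - (σ * φ (R⁻¹ • X)) • eo n with hΦ
  have hKR : (K : ℝ) / R ≤ 1 / 2 := by
    rw [div_le_div_iff₀ hR0 (by norm_num)]; linarith
  have hlip : LipschitzWith (1/2 : ℝ≥0) Φ := by
    apply LipschitzWith.of_dist_le_mul
    intro X Y
    rw [hΦ, dist_eq_norm]
    have key : z - (σ * φ (R⁻¹ • X)) • eo n - (z - (σ * φ (R⁻¹ • Y)) • eo n)
        = (σ * (φ (R⁻¹ • Y) - φ (R⁻¹ • X))) • eo n := by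
      rw [mul_sub, sub_smul]; abel
    rw [key, norm_smul, eo_norm, mul_one, Real.norm_eq_abs, abs_mul]
    have hφd : |φ (R⁻¹ • Y) - φ (R⁻¹ • X)| ≤ K / R * ‖Y - X‖ := by
      have := hK.dist_le_mul (R⁻¹ • Y) (R⁻¹ • X)
      rw [Real.dist_eq, dist_eq_norm, ← smul_sub, norm_smul, Real.norm_eq_abs,
        abs_of_pos (inv_pos.2 hR0)] at this
      calc |φ (R⁻¹ • Y) - φ (R⁻¹ • X)| ≤ K * (R⁻¹ * ‖Y - X‖) := this
      _ = K / R * ‖Y - X‖ := by ring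
    have h1 : |σ| * |φ (R⁻¹ • Y) - φ (R⁻¹ • X)| ≤ 1 * (K / R * ‖Y - X‖) :=
      mul_le_mul hσ hφd (abs_nonneg _) zero_le_one
    have h2 : (K:ℝ) / R * ‖Y - X‖ ≤ 1/2 * ‖Y - X‖ :=
      mul_le_mul_of_nonneg_right hKR (norm_nonneg _)
    have hdxy : dist X Y = ‖Y - X‖ := by rw [dist_eq_norm, norm_sub_rev]
    rw [hdxy]
    push_cast
    linarith
  have hcontr : ContractingWith (1/2 : ℝ≥0) Φ :=
    ⟨by exact_mod_cast (by norm_num : (1/2:ℝ) < 1), hlip⟩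
  set x := hcontr.fixedPoint Φ with hx
  have hfix : Φ x = x := hcontr.fixedPoint_isFixedPt
  simp only [hΦ] at hfix
  refine ⟨x, ?_⟩
  rw [pertMap_def]
  set c := σ * φ (R⁻¹ • x) with hc
  rw [← hfix]
  abel

end AuxStmt14b
end Part2
section Part3
open MeasureTheory InnerProductSpace
open scoped InnerProductSpace ENNReal NNReal

noncomputable section AuxStmt14c

def Tf (n : ℕ) (φ : ES n → ℝ) (σ R : ℝ) (X : ES n) : ES n →L[ℝ] ES n :=
  ContinuousLinearMap.id ℝ (ES n) + (σ • psiD n φ R X).smulRight (eo n)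

def Tb (n : ℕ) (φ : ES n → ℝ) (σ R : ℝ) (X : ES n) : ES n →L[ℝ] ES n :=
  ContinuousLinearMap.id ℝ (ES n)
    - ((σ / (1 + σ * qf n φ R X)) • psiD n φ R X).smulRight (eo n)

lemma Tf_apply (n : ℕ) (φ : ES n → ℝ) (σ R : ℝ) (X v : ES n) :
    Tf n φ σ R X v = v + (σ * psiD n φ R X v) • eo n := by
  simp [Tf, ContinuousLinearMap.smulRight_apply]

lemma Tb_apply (n : ℕ) (φ : ES n → ℝ) (σ R : ℝ) (X v : ES n) :
    Tb n φ σ R X v = v - ((σ / (1 + σ * qf n φ R X)) * psiD n φ R X v) • eo n := by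
  simp [Tb, ContinuousLinearMap.smulRight_apply]

lemma Tb_Tf (n : ℕ) (φ : ES n → ℝ) (σ R : ℝ) (X : ES n)
    (h : 1 + σ * qf n φ R X ≠ 0) (v : ES n) :
    Tb n φ σ R X (Tf n φ σ R X v) = v := by
  rw [Tf_apply, Tb_apply]
  have hD : psiD n φ R X (v + (σ * psiD n φ R X v) • eo n)
      = psiD n φ R X v * (1 + σ * qf n φ R X) := by
    simp only [map_add, ContinuousLinearMap.map_smul, smul_eq_mul, qf]; ring
  rw [hD]
  have hco : σ / (1 + σ * qf n φ R X) * (psiD n φ R X v * (1 + σ * qf n φ R X))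
      = σ * psiD n φ R X v := by
    field_simp
  rw [hco, add_sub_cancel_right]

lemma Tf_Tb (n : ℕ) (φ : ES n → ℝ) (σ R : ℝ) (X : ES n)
    (h : 1 + σ * qf n φ R X ≠ 0) (v : ES n) :
    Tf n φ σ R X (Tb n φ σ R X v) = v := by
  rw [Tb_apply, Tf_apply]
  have hD : psiD n φ R X (v - (σ / (1 + σ * qf n φ R X) * psiD n φ R X v) • eo n)
      = psiD n φ R X v / (1 + σ * qf n φ R X) := by
    have h' : 1 + σ * psiD n φ R X (eo n) ≠ 0 := h
    simp only [map_sub, ContinuousLinearMap.map_smul, smul_eq_mul, qf]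
    field_simp
    ring
  rw [hD]
  have hco : (σ * (psiD n φ R X v / (1 + σ * qf n φ R X)))
      = σ / (1 + σ * qf n φ R X) * psiD n φ R X v := by ring
  rw [hco, sub_add_cancel]

/-- The derivative of the perturbation map. -/
lemma pertMap_hasFDerivAt (n : ℕ) (φ : ES n → ℝ) (hφ : ContDiff ℝ (⊤ : ℕ∞) φ) (σ R : ℝ) (X : ES n) :
    HasFDerivAt (pertMap n φ σ R) (Tf n φ σ R X) X := by
  have h1 : HasFDerivAt (fun Y : ES n => (σ * φ (R⁻¹ • Y)) • eo n)
      ((σ • psiD n φ R X).smulRight (eo n)) X :=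
    ((hasFDerivAt_psi n φ hφ R X).const_mul σ).smul_const (eo n)
  have h2 := (hasFDerivAt_id X).add h1
  exact h2

/-- Determinant of the derivative. -/
lemma Tf_det (n : ℕ) (φ : ES n → ℝ) (σ R : ℝ) (X : ES n) :
    (Tf n φ σ R X).det = 1 + σ * qf n φ R X := by
  classical
  set b := (EuclideanSpace.basisFun (Fin (n+1)) ℝ).toBasis with hb
  have hdet0 : (Tf n φ σ R X).det
      = LinearMap.det (Tf n φ σ R X : ES n →ₗ[ℝ] ES n) := rfl
  have hdet : (Tf n φ σ R X).det
      = Matrix.det (LinearMap.toMatrix b b (Tf n φ σ R X : ES n →ₗ[ℝ] ES n)) := by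
    rw [hdet0, ← LinearMap.det_toMatrix b]
  have hmat : LinearMap.toMatrix b b (Tf n φ σ R X : ES n →ₗ[ℝ] ES n)
      = 1 + Matrix.replicateCol Unit (fun i => eo n i) * Matrix.replicateRow Unit
          (fun j => σ * psiD n φ R X (b j)) := by
    ext i j
    rw [LinearMap.toMatrix_apply]
    have hrepr : ∀ (y : ES n), b.repr y i = y i := fun y => rfl
    rw [hrepr]
    have happ : (Tf n φ σ R X : ES n →ₗ[ℝ] ES n) (b j) = Tf n φ σ R X (b j) := rfl
    rw [happ, Tf_apply]
    have : (b j + (σ * psiD n φ R X (b j)) • eo n) i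
        = b j i + (σ * psiD n φ R X (b j)) * eo n i := rfl
    rw [this]
    have hbji : b j i = if i = j then (1:ℝ) else 0 := by
      show (EuclideanSpace.basisFun (Fin (n+1)) ℝ) j i = _
      rw [EuclideanSpace.basisFun_apply, EuclideanSpace.single_apply]
    rw [hbji]
    simp [Matrix.mul_apply, Matrix.one_apply, mul_comm]
  rw [hdet, hmat, Matrix.det_one_add_replicateCol_mul_replicateRow]
  have heo : ∀ j : Fin (n+1), eo n j = if j = 0 then (1:ℝ) else 0 := by
    intro j; rw [eo, EuclideanSpace.single_apply]
  have hb0 : (b 0 : ES n) = eo n := by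
    show (EuclideanSpace.basisFun (Fin (n+1)) ℝ) 0 = eo n
    rw [EuclideanSpace.basisFun_apply]; rfl
  rw [dotProduct]
  have : ∀ j : Fin (n+1), σ * psiD n φ R X (b j) * eo n j
      = if j = 0 then σ * psiD n φ R X (b j) else 0 := by
    intro j; rw [heo j]; split <;> simp
  rw [Finset.sum_congr rfl (fun j _ => this j), Finset.sum_ite_eq' Finset.univ 0
    (fun j => σ * psiD n φ R X (b j))]
  simp [hb0, qf]

end AuxStmt14c
end Part3
section Part4
open MeasureTheory InnerProductSpace
open scoped InnerProductSpace ENNReal NNReal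

noncomputable section AuxStmt14d

def Vf (n : ℕ) (φ : ES n → ℝ) (R : ℝ) (u : ES n → ℝ) (σ : ℝ) (X : ES n) : ES n :=
  gradient u X - ((σ * ⟪gradient u X, eo n⟫_ℝ) / (1 + σ * qf n φ R X)) • Wv n φ R X

lemma invFun_lipschitz (n : ℕ) (φ : ES n → ℝ) (K : ℝ≥0) (hK : LipschitzWith K φ)
    (σ R : ℝ) (hσ : |σ| ≤ 1) (hR : 2 * K ≤ R) (hR0 : 0 < R)
    (hsurj : Function.Surjective (pertMap n φ σ R)) :
    LipschitzWith 2 (Function.invFun (pertMap n φ σ R)) := by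
  set g := Function.invFun (pertMap n φ σ R) with hg
  have hgr : Function.RightInverse g (pertMap n φ σ R) :=
    Function.rightInverse_invFun hsurj
  apply LipschitzWith.of_dist_le_mul
  intro p q
  have h := pertMap_dist n φ K hK σ R hσ hR hR0 (g p) (g q)
  rw [hgr p, hgr q] at h
  rw [dist_eq_norm, dist_eq_norm]
  push_cast
  linarith

lemma gradient_pertFun (n : ℕ) (φ : ES n → ℝ) (hφ : ContDiff ℝ (⊤ : ℕ∞) φ)
    (K : ℝ≥0) (hK : LipschitzWith K φ) (σ R : ℝ) (hσ : |σ| ≤ 1) (hR : 2 * K ≤ R) (hR0 : 0 < R)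
    (u : ES n → ℝ) (X : ES n) (h1 : 1 + σ * qf n φ R X ≠ 0)
    (hu : DifferentiableAt ℝ u X) :
    gradient (u ∘ Function.invFun (pertMap n φ σ R)) (pertMap n φ σ R X)
      = Vf n φ R u σ X := by
  have hinj : Function.Injective (pertMap n φ σ R) :=
    pertMap_injective n φ K hK σ R hσ hR hR0
  have hsurj : Function.Surjective (pertMap n φ σ R) :=
    pertMap_surjective n φ K hK σ R hσ hR hR0
  set f := pertMap n φ σ R with hf
  set g := Function.invFun f with hgdef
  have hgl : Function.LeftInverse g f := Function.leftInverse_invFun hinj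
  have hgr : Function.RightInverse g f := Function.rightInverse_invFun hsurj
  have hglip : LipschitzWith 2 g := invFun_lipschitz n φ K hK σ R hσ hR hR0 hsurj
  set Teq : ES n ≃L[ℝ] ES n := ContinuousLinearEquiv.equivOfInverse
    (Tf n φ σ R X) (Tb n φ σ R X) (Tb_Tf n φ σ R X h1) (Tf_Tb n φ σ R X h1) with hTeq
  have hfd : HasFDerivAt f (Teq : ES n →L[ℝ] ES n) (g (f X)) := by
    rw [hgl X]
    exact pertMap_hasFDerivAt n φ hφ σ R X
  have hgd : HasFDerivAt g ((Teq.symm : ES n →L[ℝ] ES n)) (f X) :=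
    HasFDerivAt.of_local_left_inverse hglip.continuous.continuousAt hfd
      (Filter.Eventually.of_forall hgr)
  have hu' : HasFDerivAt u (fderiv ℝ u X) (g (f X)) := by
    rw [hgl X]; exact hu.hasFDerivAt
  have hcomp : HasFDerivAt (u ∘ g)
      ((fderiv ℝ u X).comp (Teq.symm : ES n →L[ℝ] ES n)) (f X) :=
    hu'.comp (f X) hgd
  have hG : ∀ z : ES n, ⟪gradient u X, z⟫_ℝ = fderiv ℝ u X z := by
    intro z
    have : gradient u X = (toDual ℝ (ES n)).symm (fderiv ℝ u X) := rfl
    rw [this, InnerProductSpace.toDual_symm_apply]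
  have hkey : (fderiv ℝ u X).comp (Teq.symm : ES n →L[ℝ] ES n)
      = toDual ℝ (ES n) (Vf n φ R u σ X) := by
    ext v
    have hv : Tf n φ σ R X (Teq.symm v) = v := Teq.apply_symm_apply v
    set w := Teq.symm v with hw
    have hLHS : ((fderiv ℝ u X).comp (Teq.symm : ES n →L[ℝ] ES n)) v
        = fderiv ℝ u X w := rfl
    have hRHS : (toDual ℝ (ES n)) (Vf n φ R u σ X) v = ⟪Vf n φ R u σ X, v⟫_ℝ :=
      InnerProductSpace.toDual_apply_apply
    rw [hLHS, hRHS, ← hv, Tf_apply, inner_add_right, real_inner_smul_right, Vf,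
      inner_sub_left, inner_sub_left, real_inner_smul_left, real_inner_smul_left,
      hG w, hG (eo n), inner_Wv, inner_Wv]
    have h1' : 1 + σ * qf n φ R X ≠ 0 := h1
    rw [qf] at h1' ⊢
    field_simp
    ring
  have hfdv : fderiv ℝ (u ∘ g) (f X) = toDual ℝ (ES n) (Vf n φ R u σ X) := by
    rw [hcomp.fderiv, hkey]
  show (toDual ℝ (ES n)).symm (fderiv ℝ (u ∘ g) (f X)) = Vf n φ R u σ X
  rw [hfdv, LinearIsometryEquiv.symm_apply_apply]

end AuxStmt14d
end Part4
section Part5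
open MeasureTheory InnerProductSpace
open scoped InnerProductSpace ENNReal NNReal

noncomputable section AuxStmt14e

lemma sum_ident {F : Type*} [NormedAddCommGroup F] [InnerProductSpace ℝ F]
    (G W : F) (q g₁ : ℝ) (h1 : 1 + q ≠ 0) (h2 : 1 - q ≠ 0) :
    (1+q) * ‖G - (g₁/(1+q)) • W‖^2 + (1-q) * ‖G - (-g₁/(1-q)) • W‖^2
      = 2*‖G‖^2 + 2*g₁^2*‖W‖^2/(1-q^2) + (-2*g₁ + 2*g₁) * ⟪G, W⟫_ℝ := by
  rw [norm_sub_sq_real, norm_sub_sq_real, real_inner_smul_right, real_inner_smul_right,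
    norm_smul, norm_smul, Real.norm_eq_abs, Real.norm_eq_abs, mul_pow, mul_pow,
    sq_abs, sq_abs]
  have hq2 : 1 - q^2 = (1+q)*(1-q) := by ring
  rw [hq2]
  field_simp
  ring

lemma norm_gradient (n : ℕ) (v : ES n → ℝ) (x : ES n) :
    ‖gradient v x‖ = ‖fderiv ℝ v x‖ :=
  LinearIsometryEquiv.norm_map _ _

lemma smul_last (n : ℕ) (R : ℝ) (X : ES n) :
    (R • X) (Fin.last n) = R * X (Fin.last n) := rfl

lemma gradient_homog (n : ℕ) (u : ES n → ℝ)
    (hdiff : ∀ X : ES n, 0 < X (Fin.last n) → DifferentiableAt ℝ u X)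
    (hhom : ∀ X : ES n, ∀ t : ℝ, 0 < t → u (t • X) = u X)
    (R : ℝ) (hR : 0 < R) (X : ES n) (hX : 0 < X (Fin.last n)) :
    ‖gradient u (R • X)‖ = R⁻¹ * ‖gradient u X‖ := by
  have hRX : 0 < (R • X) (Fin.last n) := by
    rw [smul_last]; positivity
  have h1 : HasFDerivAt (fun Y : ES n => R • Y)
      (R • ContinuousLinearMap.id ℝ (ES n)) X := by
    exact (R • ContinuousLinearMap.id ℝ (ES n)).hasFDerivAt (x := X)
  have h2 : HasFDerivAt u (fderiv ℝ u (R • X)) (R • X) := (hdiff _ hRX).hasFDerivAt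
  have h3 := h2.comp X h1
  have huRX : (u ∘ fun Y : ES n => R • Y) = u := funext fun Y => hhom Y R hR
  rw [huRX] at h3
  have h4 : fderiv ℝ u X
      = (fderiv ℝ u (R • X)).comp (R • ContinuousLinearMap.id ℝ (ES n)) := h3.fderiv
  have h5 : (fderiv ℝ u (R • X)).comp (R • ContinuousLinearMap.id ℝ (ES n))
      = R • fderiv ℝ u (R • X) := by
    ext v
    simp [ContinuousLinearMap.map_smul, smul_eq_mul, mul_comm]
  rw [h5] at h4
  have h6 : ‖fderiv ℝ u X‖ = |R| * ‖fderiv ℝ u (R • X)‖ := by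
    rw [h4, norm_smul, Real.norm_eq_abs]
  rw [norm_gradient, norm_gradient, h6, abs_of_pos hR]
  field_simp

lemma meas_integrand (n : ℕ) (a : ℝ) (v : ES n → ℝ) :
    Measurable (fun X : ES n =>
      ENNReal.ofReal (‖gradient v X‖^2 * (X (Fin.last n))^a)) := by
  apply ENNReal.measurable_ofReal.comp
  apply Measurable.mul
  · have hg : Measurable (fun X : ES n => gradient v X) := by
      have : Continuous ((toDual ℝ (ES n)).symm : (ES n →L[ℝ] ℝ) → ES n) :=
        (toDual ℝ (ES n)).symm.continuous
      exact this.measurable.comp (measurable_fderiv ℝ v)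
    exact (hg.norm).pow_const 2
  · have hm : Measurable (fun X : ES n => X (Fin.last n)) :=
      (EuclideanSpace.proj (Fin.last n)).continuous.measurable
    measurability

lemma continuous_psiD (n : ℕ) (φ : ES n → ℝ) (hφ : ContDiff ℝ (⊤ : ℕ∞) φ) (R : ℝ) :
    Continuous (fun X : ES n => psiD n φ R X) := by
  have hψ : ContDiff ℝ (⊤ : ℕ∞) (fun Y : ES n => φ (R⁻¹ • Y)) :=
    hφ.comp (contDiff_const_smul R⁻¹)
  exact hψ.continuous_fderiv (by simp)

lemma meas_integrand2 (n : ℕ) (a : ℝ) (φ : ES n → ℝ) (hφ : ContDiff ℝ (⊤ : ℕ∞) φ)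
    (R : ℝ) (u : ES n → ℝ) (σ : ℝ) :
    Measurable (fun X : ES n =>
      ENNReal.ofReal ((1 + σ * qf n φ R X) * (‖Vf n φ R u σ X‖^2 * (X (Fin.last n))^a))) := by
  have hψc := continuous_psiD n φ hφ R
  have hq : Continuous (fun X : ES n => qf n φ R X) := hψc.clm_apply continuous_const
  have hW : Continuous (fun X : ES n => Wv n φ R X) :=
    ((toDual ℝ (ES n)).symm.continuous).comp hψc
  have hg : Measurable (fun X : ES n => gradient u X) :=
    ((toDual ℝ (ES n)).symm.continuous).measurable.comp (measurable_fderiv ℝ u)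
  have hinner : Measurable (fun X : ES n => ⟪gradient u X, eo n⟫_ℝ) :=
    hg.inner measurable_const
  have hc : Measurable (fun X : ES n =>
      (σ * ⟪gradient u X, eo n⟫_ℝ) / (1 + σ * qf n φ R X)) :=
    (measurable_const.mul hinner).div (measurable_const.add
      (measurable_const.mul hq.measurable))
  have hV : Measurable (fun X : ES n => Vf n φ R u σ X) :=
    hg.sub (hc.smul hW.measurable)
  have hm : Measurable (fun X : ES n => X (Fin.last n)) :=
    (EuclideanSpace.proj (Fin.last n)).continuous.measurable
  apply ENNReal.measurable_ofReal.comp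
  apply Measurable.mul
  · exact measurable_const.add (measurable_const.mul hq.measurable)
  · apply Measurable.mul ((hV.norm).pow_const 2)
    measurability

end AuxStmt14e
end Part5
section Part6
open MeasureTheory InnerProductSpace
open scoped InnerProductSpace ENNReal NNReal

noncomputable section AuxStmt14f

def SR (n : ℕ) (R : ℝ) : Set (ES n) := {X | ‖X‖ < R ∧ 0 < X (Fin.last n)}

lemma SR_meas (n : ℕ) (R : ℝ) : MeasurableSet (SR n R) := by
  apply MeasurableSet.inter
  · exact (isOpen_lt continuous_norm continuous_const).measurableSet
  · exact (isOpen_lt continuous_const (EuclideanSpace.proj (Fin.last n)).continuous).measurableSet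

lemma pertMap_image (n : ℕ) (hn : n ≠ 0) (φ : ES n → ℝ)
    (hφ0 : ∀ x : ES n, 3 / 4 ≤ ‖x‖ → φ x = 0) (Mφ : ℝ) (hM : ∀ x, |φ x| ≤ Mφ)
    (K : ℝ≥0) (hK : LipschitzWith K φ) (σ R : ℝ) (hσ : |σ| ≤ 1)
    (hR2K : 2 * K ≤ R) (hRM : 4 * Mφ + 4 ≤ R) :
    pertMap n φ σ R '' SR n R = SR n R := by
  have hM0 : 0 ≤ Mφ := le_trans (abs_nonneg _) (hM 0)
  have hR0 : 0 < R := by linarith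
  have hsurj := pertMap_surjective n φ K hK σ R hσ hR2K hR0
  ext y
  constructor
  · rintro ⟨X, hX, rfl⟩
    refine ⟨?_, ?_⟩
    · by_cases h34 : 3*R/4 ≤ ‖X‖
      · rw [pertMap_eq_self n φ hφ0 σ R hR0 X h34]; exact hX.1
      · push_neg at h34
        calc ‖pertMap n φ σ R X‖ ≤ ‖X‖ + ‖(σ * φ (R⁻¹ • X)) • eo n‖ := by
              rw [pertMap_def]; exact norm_add_le _ _
        _ ≤ 3*R/4 + Mφ := by
              have : ‖(σ * φ (R⁻¹ • X)) • eo n‖ ≤ Mφ := by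
                rw [norm_smul, eo_norm, mul_one, Real.norm_eq_abs, abs_mul]
                calc |σ| * |φ (R⁻¹ • X)| ≤ 1 * Mφ :=
                  mul_le_mul hσ (hM _) (abs_nonneg _) zero_le_one
                _ = Mφ := one_mul _
              linarith
        _ < R := by linarith
    · rw [pertMap_last n hn]; exact hX.2
  · intro hy
    set X := Function.invFun (pertMap n φ σ R) y with hX
    have hfX : pertMap n φ σ R X = y := Function.rightInverse_invFun hsurj y
    refine ⟨X, ⟨?_, ?_⟩, hfX⟩
    · by_cases h34 : 3*R/4 ≤ ‖X‖
      · have := pertMap_eq_self n φ hφ0 σ R hR0 X h34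
        rw [this] at hfX
        rw [hfX]; exact hy.1
      · push_neg at h34; linarith
    · have := pertMap_last n hn φ σ R X
      rw [hfX] at this
      rw [← this]; exact hy.2

lemma wEnergy_pert_eq (n : ℕ) (hn : n ≠ 0) (a : ℝ) (φ : ES n → ℝ)
    (hφ : ContDiff ℝ (⊤ : ℕ∞) φ) (hφ0 : ∀ x : ES n, 3 / 4 ≤ ‖x‖ → φ x = 0)
    (Mφ : ℝ) (hM : ∀ x, |φ x| ≤ Mφ) (K : ℝ≥0) (hK : LipschitzWith K φ)
    (σ R : ℝ) (hσ : |σ| ≤ 1) (hR2K : 2 * K ≤ R) (hR4K : 4 * K ≤ R) (hRM : 4 * Mφ + 4 ≤ R)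
    (u : ES n → ℝ) (hdiff : ∀ X : ES n, 0 < X (Fin.last n) → DifferentiableAt ℝ u X) :
    wEnergy n a (pertFun n φ σ R u) R
      = ∫⁻ X in SR n R, ENNReal.ofReal
          ((1 + σ * qf n φ R X) * (‖Vf n φ R u σ X‖^2 * (X (Fin.last n))^a)) := by
  have hM0 : 0 ≤ Mφ := le_trans (abs_nonneg _) (hM 0)
  have hR0 : 0 < R := by linarith
  have hinj := pertMap_injective n φ K hK σ R hσ hR2K hR0
  have hqb : ∀ X : ES n, |σ * qf n φ R X| ≤ 1/2 := by
    intro X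
    rw [abs_mul]
    have h1 : |qf n φ R X| ≤ K / R :=
      le_trans (qf_abs_le n φ R X) (psiD_norm_le n φ hφ K hK R hR0 X)
    have h2 : (K : ℝ) / R ≤ 1/4 := by
      rw [div_le_div_iff₀ hR0 (by norm_num)]; linarith
    calc |σ| * |qf n φ R X| ≤ 1 * (1/4) := by
          apply mul_le_mul hσ (by linarith) (abs_nonneg _) zero_le_one
    _ ≤ 1/2 := by norm_num
  have hcov := lintegral_image_eq_lintegral_abs_det_fderiv_mul (volume : Measure (ES n))
    (SR_meas n R)
    (fun X _ => (pertMap_hasFDerivAt n φ hφ σ R X).hasFDerivWithinAt)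
    (Function.Injective.injOn hinj)
    (fun X => ENNReal.ofReal
      (‖gradient (pertFun n φ σ R u) X‖^2 * (X (Fin.last n))^a))
  rw [pertMap_image n hn φ hφ0 Mφ hM K hK σ R hσ hR2K hRM] at hcov
  have hwE : wEnergy n a (pertFun n φ σ R u) R
      = ∫⁻ X in SR n R, ENNReal.ofReal
          (‖gradient (pertFun n φ σ R u) X‖^2 * (X (Fin.last n))^a) := rfl
  rw [hwE, hcov]
  apply setLIntegral_congr_fun (SR_meas n R)
  intro X hX
  have hq := hqb X
  have h1 : (0:ℝ) < 1 + σ * qf n φ R X := by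
    rcases abs_le.1 hq with ⟨hl, _⟩; linarith
  have hdet : (Tf n φ σ R X).det = 1 + σ * qf n φ R X := Tf_det n φ σ R X
  have hgrad : gradient (pertFun n φ σ R u) (pertMap n φ σ R X) = Vf n φ R u σ X :=
    gradient_pertFun n φ hφ K hK σ R hσ hR2K hR0 u X (ne_of_gt h1) (hdiff X hX.2)
  have hlast : pertMap n φ σ R X (Fin.last n) = X (Fin.last n) := pertMap_last n hn φ σ R X
  beta_reduce
  rw [hdet, hgrad, hlast, abs_of_pos h1, ← ENNReal.ofReal_mul (le_of_lt h1)]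

end AuxStmt14f
end Part6
section Part7
open MeasureTheory InnerProductSpace
open scoped InnerProductSpace ENNReal NNReal

noncomputable section AuxStmt14g

def AnnP (n : ℕ) (R : ℝ) : Set (ES n) :=
  {X | (R/2 ≤ ‖X‖ ∧ ‖X‖ ≤ 3*R/4) ∧ 0 < X (Fin.last n)}

lemma AnnP_meas (n : ℕ) (R : ℝ) : MeasurableSet (AnnP n R) := by
  apply MeasurableSet.inter
  · exact ((isClosed_le continuous_const continuous_norm).inter
      (isClosed_le continuous_norm continuous_const)).measurableSet
  · exact (isOpen_lt continuous_const (EuclideanSpace.proj (Fin.last n)).continuous).measurableSet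

lemma smul_image_AnnP (n : ℕ) (R : ℝ) (hR : 0 < R) :
    (fun X : ES n => R • X) '' AnnP n 1 = AnnP n R := by
  ext y
  constructor
  · rintro ⟨X, ⟨⟨h1, h2⟩, h3⟩, rfl⟩
    have hn : ‖R • X‖ = R * ‖X‖ := by
      rw [norm_smul, Real.norm_eq_abs, abs_of_pos hR]
    refine ⟨⟨?_, ?_⟩, ?_⟩
    · rw [hn]; nlinarith
    · rw [hn]; nlinarith
    · show 0 < (R • X) (Fin.last n)
      rw [smul_last]; positivity
  · intro hy
    refine ⟨R⁻¹ • y, ⟨⟨?_, ?_⟩, ?_⟩, ?_⟩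
    · have : ‖R⁻¹ • y‖ = R⁻¹ * ‖y‖ := by
        rw [norm_smul, Real.norm_eq_abs, abs_of_pos (inv_pos.2 hR)]
      rw [this, le_inv_mul_iff₀ hR]
      have := hy.1.1; linarith
    · have : ‖R⁻¹ • y‖ = R⁻¹ * ‖y‖ := by
        rw [norm_smul, Real.norm_eq_abs, abs_of_pos (inv_pos.2 hR)]
      rw [this, inv_mul_le_iff₀ hR]
      have := hy.1.2; linarith
    · rw [smul_last]
      have := hy.2
      positivity
    · show R • (R⁻¹ • y) = y
      rw [smul_inv_smul₀ (ne_of_gt hR)]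

lemma det_smul_id (n : ℕ) (R : ℝ) :
    (R • ContinuousLinearMap.id ℝ (ES n)).det = R^(n+1) := by
  have hcoe : ((R • ContinuousLinearMap.id ℝ (ES n) : ES n →L[ℝ] ES n) : ES n →ₗ[ℝ] ES n)
      = R • (LinearMap.id : ES n →ₗ[ℝ] ES n) := by
    ext v; simp
  have : (R • ContinuousLinearMap.id ℝ (ES n)).det
      = LinearMap.det (R • (LinearMap.id : ES n →ₗ[ℝ] ES n)) := by
    rw [ContinuousLinearMap.det, hcoe]
  rw [this, LinearMap.det_smul, LinearMap.det_id, finrank_euclideanSpace_fin, mul_one]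

lemma ann_scale (n : ℕ) (a : ℝ) (ha : 0 < a) (u : ES n → ℝ)
    (hdiff : ∀ X : ES n, 0 < X (Fin.last n) → DifferentiableAt ℝ u X)
    (hhom : ∀ X : ES n, ∀ t : ℝ, 0 < t → u (t • X) = u X)
    (R : ℝ) (hR1 : 1 ≤ R) :
    ∫⁻ X in AnnP n R, ENNReal.ofReal (‖gradient u X‖^2 * (X (Fin.last n))^a)
      ≤ ENNReal.ofReal (R^((n:ℝ) - 1 + a)) * wEnergy n a u 1 := by
  have hR0 : (0:ℝ) < R := by linarith
  have hcov := lintegral_image_eq_lintegral_abs_det_fderiv_mul (volume : Measure (ES n))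
    (AnnP_meas n 1)
    (fun X _ => by
      have h : HasFDerivAt (fun X : ES n => R • X) (R • ContinuousLinearMap.id ℝ (ES n)) X := by
        exact (R • ContinuousLinearMap.id ℝ (ES n)).hasFDerivAt (x := X)
      exact h.hasFDerivWithinAt)
    ((smul_right_injective (ES n) (ne_of_gt hR0)).injOn)
    (fun X => ENNReal.ofReal (‖gradient u X‖^2 * (X (Fin.last n))^a))
  rw [smul_image_AnnP n R hR0] at hcov
  rw [hcov]
  have hptw : ∀ X ∈ AnnP n 1,
      ENNReal.ofReal |(R • ContinuousLinearMap.id ℝ (ES n)).det|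
        * ENNReal.ofReal (‖gradient u (R • X)‖^2 * ((R • X) (Fin.last n))^a)
      = ENNReal.ofReal (R^((n:ℝ) - 1 + a))
        * ENNReal.ofReal (‖gradient u X‖^2 * (X (Fin.last n))^a) := by
    intro X hX
    have hXl : 0 < X (Fin.last n) := hX.2
    rw [det_smul_id, gradient_homog n u hdiff hhom R hR0 X hXl, smul_last,
      abs_of_pos (by positivity : (0:ℝ) < R^(n+1))]
    rw [← ENNReal.ofReal_mul (by positivity), ← ENNReal.ofReal_mul
      (le_of_lt (Real.rpow_pos_of_pos hR0 _))]
    congr 1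
    have hx : (0:ℝ) ≤ X (Fin.last n) := le_of_lt hXl
    rw [Real.mul_rpow (le_of_lt hR0) hx]
    have hpow : R^((n:ℝ) - 1 + a) = R^(n+1) * (R⁻¹)^2 * R^a := by
      have e1 : R^((n:ℝ) - 1 + a) = R^(((n:ℝ)+1) + (-2) + a) := by ring_nf
      rw [e1, Real.rpow_add hR0, Real.rpow_add hR0]
      have e2 : R ^ ((n:ℝ)+1) = R^(n+1) := by
        rw [show ((n:ℝ)+1) = ((n+1 : ℕ) : ℝ) by push_cast; ring, Real.rpow_natCast]
      have e3 : R ^ (-2 : ℝ) = (R⁻¹)^2 := by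
        rw [show (-2:ℝ) = -(2:ℕ) by norm_num, Real.rpow_neg (le_of_lt hR0),
          Real.rpow_natCast, inv_pow]
      rw [e2, e3]
    rw [hpow]
    ring
  rw [setLIntegral_congr_fun (AnnP_meas n 1) hptw]
  rw [lintegral_const_mul' _ _ ENNReal.ofReal_ne_top]
  apply mul_le_mul_right 
  apply lintegral_mono_set
  intro X hX
  exact ⟨lt_of_le_of_lt hX.1.2 (by norm_num), hX.2⟩

end AuxStmt14g
end Part7
section Part8
open MeasureTheory InnerProductSpace
open scoped InnerProductSpace ENNReal NNReal

noncomputable section AuxStmt14h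

lemma qf_small (n : ℕ) (φ : ES n → ℝ) (hφ : ContDiff ℝ (⊤ : ℕ∞) φ) (K : ℝ≥0)
    (hK : LipschitzWith K φ) (R : ℝ) (hR0 : 0 < R) (hR4K : 4 * K ≤ R) (X : ES n) :
    |qf n φ R X| ≤ 1/4 := by
  have h1 : |qf n φ R X| ≤ K / R :=
    le_trans (qf_abs_le n φ R X) (psiD_norm_le n φ hφ K hK R hR0 X)
  have h2 : (K : ℝ) / R ≤ 1/4 := by
    rw [div_le_div_iff₀ hR0 (by norm_num)]; linarith
  linarith

lemma pointwise_sum (n : ℕ) (a : ℝ) (φ : ES n → ℝ) (hφ : ContDiff ℝ (⊤ : ℕ∞) φ) (K : ℝ≥0)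
    (hK : LipschitzWith K φ) (R : ℝ) (hR0 : 0 < R) (hR4K : 4 * K ≤ R)
    (u : ES n → ℝ) (X : ES n) (hx : 0 ≤ X (Fin.last n)) :
    ENNReal.ofReal ((1 + 1 * qf n φ R X) * (‖Vf n φ R u 1 X‖^2 * (X (Fin.last n))^a))
      + ENNReal.ofReal ((1 + (-1) * qf n φ R X) * (‖Vf n φ R u (-1) X‖^2 * (X (Fin.last n))^a))
    = ENNReal.ofReal (2 * (‖gradient u X‖^2 * (X (Fin.last n))^a))
      + ENNReal.ofReal (2 * ⟪gradient u X, eo n⟫_ℝ^2 * ‖Wv n φ R X‖^2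
          / (1 - qf n φ R X^2) * (X (Fin.last n))^a) := by
  have hq := qf_small n φ hφ K hK R hR0 hR4K X
  set q := qf n φ R X with hqdef
  set G := gradient u X with hG
  set W := Wv n φ R X with hW
  set g₁ := ⟪G, eo n⟫_ℝ with hg₁
  obtain ⟨hql, hqr⟩ := abs_le.1 hq
  have h1p : (0:ℝ) < 1 + q := by linarith
  have h2p : (0:ℝ) < 1 - q := by linarith
  have hq2 : (0:ℝ) < 1 - q^2 := by nlinarith
  have hxa : (0:ℝ) ≤ (X (Fin.last n))^a := Real.rpow_nonneg hx a
  have hV1 : Vf n φ R u 1 X = G - (g₁/(1+q)) • W := by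
    rw [Vf, ← hqdef, ← hG, ← hW, ← hg₁]; norm_num
  have hV2 : Vf n φ R u (-1) X = G - (-g₁/(1-q)) • W := by
    rw [Vf, ← hqdef, ← hG, ← hW, ← hg₁]
    congr 1
    rw [show (1 + (-1) * q) = 1 - q by ring]
    ring_nf
  have key := sum_ident G W q g₁ (ne_of_gt h1p) (ne_of_gt h2p)
  have key2 : (1+q) * ‖G - (g₁/(1+q)) • W‖^2 + (1-q) * ‖G - (-g₁/(1-q)) • W‖^2
      = 2*‖G‖^2 + 2*g₁^2*‖W‖^2/(1-q^2) := by rw [key]; ring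
  have hA : (0:ℝ) ≤ (1 + 1*q) * (‖Vf n φ R u 1 X‖^2 * (X (Fin.last n))^a) := by
    apply mul_nonneg (by linarith) (mul_nonneg (sq_nonneg _) hxa)
  have hB : (0:ℝ) ≤ (1 + (-1)*q) * (‖Vf n φ R u (-1) X‖^2 * (X (Fin.last n))^a) := by
    apply mul_nonneg (by linarith) (mul_nonneg (sq_nonneg _) hxa)
  have hC : (0:ℝ) ≤ 2 * (‖G‖^2 * (X (Fin.last n))^a) := by positivity
  have hD : (0:ℝ) ≤ 2 * g₁^2 * ‖W‖^2 / (1 - q^2) * (X (Fin.last n))^a := by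
    apply mul_nonneg _ hxa
    apply div_nonneg (by positivity) (le_of_lt hq2)
  rw [← ENNReal.ofReal_add hA hB, ← ENNReal.ofReal_add hC hD]
  congr 1
  rw [hV1, hV2]
  linear_combination (X (Fin.last n))^a * key2

lemma pointwise_bound (n : ℕ) (a : ℝ) (φ : ES n → ℝ) (hφ : ContDiff ℝ (⊤ : ℕ∞) φ)
    (hφ1 : ∀ x : ES n, ‖x‖ ≤ 1 / 2 → φ x = 1) (hφ0 : ∀ x : ES n, 3 / 4 ≤ ‖x‖ → φ x = 0)
    (K : ℝ≥0) (hK : LipschitzWith K φ) (R : ℝ) (hR0 : 0 < R) (hR4K : 4 * K ≤ R)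
    (u : ES n → ℝ) (X : ES n) (hX : X ∈ SR n R) :
    ENNReal.ofReal (2 * ⟪gradient u X, eo n⟫_ℝ^2 * ‖Wv n φ R X‖^2
        / (1 - qf n φ R X^2) * (X (Fin.last n))^a)
      ≤ ENNReal.ofReal (4*(K:ℝ)^2/R^2) * (AnnP n R).indicator
          (fun Y => ENNReal.ofReal (‖gradient u Y‖^2 * (Y (Fin.last n))^a)) X := by
  by_cases hmem : X ∈ AnnP n R
  · rw [Set.indicator_of_mem hmem,
      ← ENNReal.ofReal_mul (by positivity : (0:ℝ) ≤ 4*(K:ℝ)^2/R^2)]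
    apply ENNReal.ofReal_le_ofReal
    have hq := qf_small n φ hφ K hK R hR0 hR4K X
    obtain ⟨hql, hqr⟩ := abs_le.1 hq
    have hq2 : (1:ℝ)/2 ≤ 1 - qf n φ R X^2 := by nlinarith
    have hq2p : (0:ℝ) < 1 - qf n φ R X^2 := by linarith
    have hxa : (0:ℝ) ≤ (X (Fin.last n))^a := Real.rpow_nonneg (le_of_lt hX.2) a
    have hWn : ‖Wv n φ R X‖ ≤ (K:ℝ)/R := by
      rw [Wv_norm]; exact psiD_norm_le n φ hφ K hK R hR0 X
    have hW0 : (0:ℝ) ≤ ‖Wv n φ R X‖ := norm_nonneg _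
    have hWsq : ‖Wv n φ R X‖^2 ≤ ((K:ℝ)/R)^2 := by nlinarith
    have hg : ⟪gradient u X, eo n⟫_ℝ^2 ≤ ‖gradient u X‖^2 := by
      have h := abs_real_inner_le_norm (gradient u X) (eo n)
      rw [eo_norm, mul_one] at h
      have := abs_nonneg (⟪gradient u X, eo n⟫_ℝ)
      nlinarith [sq_abs (⟪gradient u X, eo n⟫_ℝ)]
    have step1 : 2 * ⟪gradient u X, eo n⟫_ℝ^2 * ‖Wv n φ R X‖^2 / (1 - qf n φ R X^2)
        ≤ 4 * (⟪gradient u X, eo n⟫_ℝ^2 * ‖Wv n φ R X‖^2) := by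
      rw [div_le_iff₀ hq2p]
      nlinarith [mul_nonneg (sq_nonneg (⟪gradient u X, eo n⟫_ℝ)) (sq_nonneg ‖Wv n φ R X‖)]
    have step2 : ⟪gradient u X, eo n⟫_ℝ^2 * ‖Wv n φ R X‖^2
        ≤ ‖gradient u X‖^2 * ((K:ℝ)/R)^2 :=
      mul_le_mul hg hWsq (sq_nonneg _) (sq_nonneg _)
    have step3 : 2 * ⟪gradient u X, eo n⟫_ℝ^2 * ‖Wv n φ R X‖^2 / (1 - qf n φ R X^2)
        ≤ 4*(K:ℝ)^2/R^2 * ‖gradient u X‖^2 := by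
      calc 2 * ⟪gradient u X, eo n⟫_ℝ^2 * ‖Wv n φ R X‖^2 / (1 - qf n φ R X^2)
          ≤ 4 * (⟪gradient u X, eo n⟫_ℝ^2 * ‖Wv n φ R X‖^2) := step1
      _ ≤ 4 * (‖gradient u X‖^2 * ((K:ℝ)/R)^2) := by linarith
      _ = 4*(K:ℝ)^2/R^2 * ‖gradient u X‖^2 := by
          rw [div_pow]; ring
    calc 2 * ⟪gradient u X, eo n⟫_ℝ^2 * ‖Wv n φ R X‖^2 / (1 - qf n φ R X^2)
        * (X (Fin.last n))^a
        ≤ (4*(K:ℝ)^2/R^2 * ‖gradient u X‖^2) * (X (Fin.last n))^a :=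
          mul_le_mul_of_nonneg_right step3 hxa
    _ = 4*(K:ℝ)^2/R^2 * (‖gradient u X‖^2 * (X (Fin.last n))^a) := by ring
  · rw [Set.indicator_of_notMem hmem]
    have hcase : ‖X‖ < R/2 ∨ 3*R/4 < ‖X‖ := by
      by_contra hcon
      push_neg at hcon
      exact hmem ⟨hcon, hX.2⟩
    have hpsi : psiD n φ R X = 0 := by
      rcases hcase with h | h
      · exact psiD_zero_lower n φ R hR0 hφ1 X h
      · exact psiD_zero_upper n φ R hR0 hφ0 X h
    have hWz : ‖Wv n φ R X‖ = 0 := by rw [Wv_norm, hpsi, norm_zero]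
    have hzero : 2 * ⟪gradient u X, eo n⟫_ℝ^2 * ‖Wv n φ R X‖^2
        / (1 - qf n φ R X^2) * (X (Fin.last n))^a = 0 := by
      rw [hWz]; ring
    rw [hzero, ENNReal.ofReal_zero]
    exact zero_le

end AuxStmt14h
end Part8
section Part9
open MeasureTheory InnerProductSpace
open scoped InnerProductSpace ENNReal NNReal

noncomputable section AuxStmt14i

lemma meas_real (n : ℕ) (a : ℝ) (v : ES n → ℝ) :
    Measurable (fun X : ES n => ‖gradient v X‖^2 * (X (Fin.last n))^a) := by
  apply Measurable.mul
  · have hg : Measurable (fun X : ES n => gradient v X) :=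
      ((toDual ℝ (ES n)).symm.continuous).measurable.comp (measurable_fderiv ℝ v)
    exact (hg.norm).pow_const 2
  · have hm : Measurable (fun X : ES n => X (Fin.last n)) :=
      (EuclideanSpace.proj (Fin.last n)).continuous.measurable
    measurability

lemma main_est (n : ℕ) (hn : n ≠ 0) (a : ℝ) (ha : 0 < a)
    (φ : ES n → ℝ) (hφ : ContDiff ℝ (⊤ : ℕ∞) φ)
    (hφ1 : ∀ x : ES n, ‖x‖ ≤ 1 / 2 → φ x = 1) (hφ0 : ∀ x : ES n, 3 / 4 ≤ ‖x‖ → φ x = 0)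
    (Mφ : ℝ) (hM : ∀ x, |φ x| ≤ Mφ) (K : ℝ≥0) (hK : LipschitzWith K φ)
    (u : ES n → ℝ) (hdiff : ∀ X : ES n, 0 < X (Fin.last n) → DifferentiableAt ℝ u X)
    (hhom : ∀ X : ES n, ∀ t : ℝ, 0 < t → u (t • X) = u X)
    (hfin1 : wEnergy n a u 1 ≠ ⊤)
    (R : ℝ) (hR : 4*(K:ℝ) + 4*Mφ + 8 ≤ R) :
    wEnergy n a (pertFun n φ 1 R u) R + wEnergy n a (pertFun n φ (-1) R u) R
        ≤ 2 * wEnergy n a u R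
          + ENNReal.ofReal ((4*(K:ℝ)^2*(wEnergy n a u 1).toReal) * R ^ ((n:ℝ) - 3 + a)) ∧
      2 * wEnergy n a u R
        ≤ wEnergy n a (pertFun n φ 1 R u) R + wEnergy n a (pertFun n φ (-1) R u) R
          + ENNReal.ofReal ((4*(K:ℝ)^2*(wEnergy n a u 1).toReal) * R ^ ((n:ℝ) - 3 + a)) := by
  have hK0 : (0:ℝ) ≤ K := K.coe_nonneg
  have hM0 : (0:ℝ) ≤ Mφ := le_trans (abs_nonneg _) (hM 0)
  have hR0 : (0:ℝ) < R := by linarith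
  have hR1 : (1:ℝ) ≤ R := by linarith
  have hR2K : 2*(K:ℝ) ≤ R := by linarith
  have hR4K : 4*(K:ℝ) ≤ R := by linarith
  have hRM : 4*Mφ + 4 ≤ R := by linarith
  have hA := wEnergy_pert_eq n hn a φ hφ hφ0 Mφ hM K hK 1 R (by norm_num) hR2K hR4K hRM u hdiff
  have hB := wEnergy_pert_eq n hn a φ hφ hφ0 Mφ hM K hK (-1) R (by norm_num) hR2K hR4K hRM
    u hdiff
  set E := wEnergy n a u R with hE
  set D := ∫⁻ X in SR n R, ENNReal.ofReal (2 * ⟪gradient u X, eo n⟫_ℝ^2 * ‖Wv n φ R X‖^2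
      / (1 - qf n φ R X^2) * (X (Fin.last n))^a) with hD
  have hAB : wEnergy n a (pertFun n φ 1 R u) R + wEnergy n a (pertFun n φ (-1) R u) R
      = 2 * E + D := by
    rw [hA, hB, ← lintegral_add_left (meas_integrand2 n a φ hφ R u 1)]
    have hpt : ∀ X ∈ SR n R,
        ENNReal.ofReal ((1 + 1 * qf n φ R X) * (‖Vf n φ R u 1 X‖^2 * (X (Fin.last n))^a))
          + ENNReal.ofReal ((1 + (-1) * qf n φ R X)
              * (‖Vf n φ R u (-1) X‖^2 * (X (Fin.last n))^a))
        = ENNReal.ofReal (2 * (‖gradient u X‖^2 * (X (Fin.last n))^a))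
          + ENNReal.ofReal (2 * ⟪gradient u X, eo n⟫_ℝ^2 * ‖Wv n φ R X‖^2
              / (1 - qf n φ R X^2) * (X (Fin.last n))^a) := fun X hX =>
      pointwise_sum n a φ hφ K hK R hR0 hR4K u X (le_of_lt hX.2)
    rw [setLIntegral_congr_fun (SR_meas n R) hpt]
    rw [lintegral_add_left (Measurable.ennreal_ofReal (f := fun X : ES n => 2 * (‖gradient u X‖^2 * (X (Fin.last n))^a)) (measurable_const.mul (meas_real n a u)))]
    congr 1
    have h2 : ∀ X : ES n, ENNReal.ofReal (2 * (‖gradient u X‖^2 * (X (Fin.last n))^a))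
        = 2 * ENNReal.ofReal (‖gradient u X‖^2 * (X (Fin.last n))^a) := by
      intro X
      rw [ENNReal.ofReal_mul (by norm_num : (0:ℝ) ≤ 2)]
      congr 1
      exact ENNReal.ofReal_ofNat 2
    simp_rw [h2]
    rw [lintegral_const_mul' _ _ (by simp : (2:ℝ≥0∞) ≠ ⊤)]
    rfl
  have hDb : D ≤ ENNReal.ofReal ((4*(K:ℝ)^2*(wEnergy n a u 1).toReal) * R ^ ((n:ℝ) - 3 + a)) := by
    have hpb : ∀ X ∈ SR n R,
        ENNReal.ofReal (2 * ⟪gradient u X, eo n⟫_ℝ^2 * ‖Wv n φ R X‖^2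
          / (1 - qf n φ R X^2) * (X (Fin.last n))^a)
        ≤ ENNReal.ofReal (4*(K:ℝ)^2/R^2) * (AnnP n R).indicator
            (fun Y => ENNReal.ofReal (‖gradient u Y‖^2 * (Y (Fin.last n))^a)) X :=
      fun X hX => pointwise_bound n a φ hφ hφ1 hφ0 K hK R hR0 hR4K u X hX
    set F : ES n → ℝ≥0∞ := fun Y => ENNReal.ofReal (‖gradient u Y‖^2 * (Y (Fin.last n))^a)
      with hF
    set c : ℝ≥0∞ := ENNReal.ofReal (4*(K:ℝ)^2/R^2) with hc
    have hstep1 : D ≤ ∫⁻ X in SR n R, c * (AnnP n R).indicator F X :=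
      setLIntegral_mono' (SR_meas n R) hpb
    have h1 : ∫⁻ X in SR n R, c * (AnnP n R).indicator F X
        = c * ∫⁻ X in SR n R, (AnnP n R).indicator F X :=
      lintegral_const_mul' _ _ (by rw [hc]; exact ENNReal.ofReal_ne_top)
    have h2 : ∫⁻ X in SR n R, (AnnP n R).indicator F X ≤ ∫⁻ X, (AnnP n R).indicator F X :=
      setLIntegral_le_lintegral _ _
    have h3 : ∫⁻ X, (AnnP n R).indicator F X = ∫⁻ X in AnnP n R, F X :=
      lintegral_indicator (AnnP_meas n R) F
    have h4 : ∫⁻ X in AnnP n R, F X ≤ ENNReal.ofReal (R^((n:ℝ)-1+a)) * wEnergy n a u 1 :=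
      ann_scale n a ha u hdiff hhom R hR1
    have hchain : D ≤ c * (ENNReal.ofReal (R^((n:ℝ)-1+a)) * wEnergy n a u 1) := by
      calc D ≤ _ := hstep1
      _ = _ := h1
      _ ≤ c * ∫⁻ X, (AnnP n R).indicator F X := mul_le_mul_right h2 _
      _ = c * ∫⁻ X in AnnP n R, F X := by rw [h3]
      _ ≤ _ := mul_le_mul_right h4 _
    have hstep3 : c * (ENNReal.ofReal (R^((n:ℝ) - 1 + a)) * wEnergy n a u 1)
        = ENNReal.ofReal ((4*(K:ℝ)^2*(wEnergy n a u 1).toReal) * R ^ ((n:ℝ) - 3 + a)) := by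
      rw [hc, ← ENNReal.ofReal_toReal hfin1, ENNReal.toReal_ofReal ENNReal.toReal_nonneg]
      rw [← ENNReal.ofReal_mul (le_of_lt (Real.rpow_pos_of_pos hR0 _)),
        ← ENNReal.ofReal_mul (by positivity : (0:ℝ) ≤ 4*(K:ℝ)^2/R^2)]
      congr 1
      have hsplit : R^((n:ℝ)-1+a) = R^((n:ℝ)-3+a) * R^2 := by
        rw [show (n:ℝ)-1+a = ((n:ℝ)-3+a) + 2 by ring, Real.rpow_add hR0]
        congr 1
        rw [show (2:ℝ) = ((2:ℕ):ℝ) by norm_num, Real.rpow_natCast]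
      rw [hsplit]
      field_simp
    rw [← hstep3]
    exact hchain
  constructor
  · rw [hAB]
    exact add_le_add_right hDb _
  · rw [hAB]
    calc 2 * E ≤ 2 * E + D := self_le_add_right _ _
    _ ≤ 2 * E + D + _ := self_le_add_right _ _
end AuxStmt14i
end Part9
section Part10
open MeasureTheory InnerProductSpace
open scoped InnerProductSpace ENNReal NNReal

noncomputable section AuxStmt14j

lemma zero_dim_rep (Z : ES 0) : Z = (Z (Fin.last 0)) • eo 0 := by
  ext i
  have hi : i = Fin.last 0 := Fin.ext (by omega)
  subst hi
  show Z (Fin.last 0) = Z (Fin.last 0) * eo 0 (Fin.last 0)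
  have : eo 0 (Fin.last 0) = 1 := by
    have h0 : (Fin.last 0) = (0 : Fin 1) := Fin.ext (by simp)
    rw [h0, eo, EuclideanSpace.single_apply, if_pos rfl]
  rw [this, mul_one]

lemma zero_dim_const_pos (u : ES 0 → ℝ)
    (hhom : ∀ X : ES 0, ∀ t : ℝ, 0 < t → u (t • X) = u X)
    (Y : ES 0) (hY : 0 < Y (Fin.last 0)) : u Y = u (eo 0) := by
  have h := zero_dim_rep Y
  rw [h]
  exact hhom (eo 0) (Y (Fin.last 0)) hY

lemma zero_dim_const_neg (u : ES 0 → ℝ)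
    (hhom : ∀ X : ES 0, ∀ t : ℝ, 0 < t → u (t • X) = u X)
    (Y : ES 0) (hY : Y (Fin.last 0) < 0) : u Y = u (-eo 0) := by
  have h : Y = (-(Y (Fin.last 0))) • (-eo 0) := by
    rw [smul_neg, ← neg_smul, neg_neg]
    exact zero_dim_rep Y
  rw [h]
  exact hhom (-eo 0) (-(Y (Fin.last 0))) (by linarith)

lemma grad_zero_of_local_const (v : ES 0 → ℝ) (c : ℝ) (X : ES 0)
    (hev : v =ᶠ[nhds X] fun _ => c) : gradient v X = 0 := by
  have h1 : fderiv ℝ v X = 0 := by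
    rw [hev.fderiv_eq, fderiv_const_apply]
  show (toDual ℝ (ES 0)).symm (fderiv ℝ v X) = 0
  rw [h1, map_zero]

lemma wEnergy_zero_dim (a : ℝ) (u : ES 0 → ℝ)
    (hhom : ∀ X : ES 0, ∀ t : ℝ, 0 < t → u (t • X) = u X) (R : ℝ) :
    wEnergy 0 a u R = 0 := by
  have hw : wEnergy 0 a u R = ∫⁻ X in SR 0 R,
      ENNReal.ofReal (‖gradient u X‖^2 * (X (Fin.last 0))^a) := rfl
  have hP : IsOpen {Y : ES 0 | 0 < Y (Fin.last 0)} :=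
    isOpen_lt continuous_const (EuclideanSpace.proj (Fin.last 0)).continuous
  have hzero : ∀ X ∈ SR 0 R,
      ENNReal.ofReal (‖gradient u X‖^2 * (X (Fin.last 0))^a) = 0 := by
    intro X hX
    have hev : u =ᶠ[nhds X] fun _ => u (eo 0) := by
      filter_upwards [hP.mem_nhds hX.2] with Y hY
      exact zero_dim_const_pos u hhom Y hY
    rw [grad_zero_of_local_const u (u (eo 0)) X hev]
    simp
  rw [hw, setLIntegral_congr_fun (SR_meas 0 R) hzero]
  exact lintegral_zero

lemma wEnergy_pert_zero_dim (a : ℝ) (φ : ES 0 → ℝ) (K : ℝ≥0) (hK : LipschitzWith K φ)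
    (σ R : ℝ) (hσ : |σ| ≤ 1) (hR2K : 2 * K ≤ R) (hR0 : 0 < R)
    (u : ES 0 → ℝ) (hhom : ∀ X : ES 0, ∀ t : ℝ, 0 < t → u (t • X) = u X) :
    wEnergy 0 a (pertFun 0 φ σ R u) R = 0 := by
  have hinj := pertMap_injective 0 φ K hK σ R hσ hR2K hR0
  have hsurj := pertMap_surjective 0 φ K hK σ R hσ hR2K hR0
  set f := pertMap 0 φ σ R with hf
  set g := Function.invFun f with hg
  have hgr : Function.RightInverse g f := Function.rightInverse_invFun hsurj
  have hglip : LipschitzWith 2 g := invFun_lipschitz 0 φ K hK σ R hσ hR2K hR0 hsurj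
  have hgc : Continuous (fun Z : ES 0 => (g Z) (Fin.last 0)) :=
    (EuclideanSpace.proj (Fin.last 0)).continuous.comp hglip.continuous
  have hw : wEnergy 0 a (pertFun 0 φ σ R u) R = ∫⁻ X in SR 0 R,
      ENNReal.ofReal (‖gradient (pertFun 0 φ σ R u) X‖^2 * (X (Fin.last 0))^a) := rfl
  have hsing : (volume : Measure (ES 0)) {f 0} = 0 := measure_singleton _
  have hae : ∀ᵐ Y : ES 0, Y ∉ ({f 0} : Set (ES 0)) :=
    measure_eq_zero_iff_ae_notMem.mp hsing
  have hzero : ∀ᵐ Y : ES 0, Y ∈ SR 0 R →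
      ENNReal.ofReal (‖gradient (pertFun 0 φ σ R u) Y‖^2 * (Y (Fin.last 0))^a) = 0 := by
    filter_upwards [hae] with Y hY hYs
    have hgY : (g Y) (Fin.last 0) ≠ 0 := by
      intro h0
      have : g Y = 0 := by
        rw [zero_dim_rep (g Y), h0, zero_smul]
      apply hY
      show Y = f 0
      rw [← this, hgr Y]
    rcases lt_or_gt_of_ne hgY with hneg | hpos
    · have hO : IsOpen {Z : ES 0 | (g Z) (Fin.last 0) < 0} :=
        isOpen_lt hgc continuous_const
      have hev : (pertFun 0 φ σ R u) =ᶠ[nhds Y] fun _ => u (-eo 0) := by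
        filter_upwards [hO.mem_nhds hneg] with Z hZ
        show u (g Z) = u (-eo 0)
        exact zero_dim_const_neg u hhom (g Z) hZ
      rw [grad_zero_of_local_const _ _ Y hev]
      simp
    · have hO : IsOpen {Z : ES 0 | 0 < (g Z) (Fin.last 0)} :=
        isOpen_lt continuous_const hgc
      have hev : (pertFun 0 φ σ R u) =ᶠ[nhds Y] fun _ => u (eo 0) := by
        filter_upwards [hO.mem_nhds hpos] with Z hZ
        show u (g Z) = u (eo 0)
        exact zero_dim_const_pos u hhom (g Z) hZ
      rw [grad_zero_of_local_const _ _ Y hev]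
      simp
  rw [hw, setLIntegral_congr_fun_ae (SR_meas 0 R) hzero]
  exact lintegral_zero

end AuxStmt14j
end Part10

section FinalThm
open MeasureTheory InnerProductSpace
open scoped InnerProductSpace ENNReal NNReal

/-- Lemma 2.1: for `u` homogeneous of degree zero with finite weighted energy
on every half-ball, `|E_R(u_R^+) + E_R(u_R^-) - 2 E_R(u)| ≤ C R^{n-3+a}` for large `R`. -/
theorem stmt_14 (n : ℕ) (a : ℝ) (ha : a ∈ Set.Ioo (0 : ℝ) 1)
    (φ : EuclideanSpace ℝ (Fin (n + 1)) → ℝ)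
    (hφ : ContDiff ℝ (⊤ : ℕ∞) φ) (hφc : HasCompactSupport φ)
    (hφ1 : ∀ x, ‖x‖ ≤ 1 / 2 → φ x = 1) (hφ0 : ∀ x, 3 / 4 ≤ ‖x‖ → φ x = 0)
    (u : EuclideanSpace ℝ (Fin (n + 1)) → ℝ)
    (hdiff : ∀ X : EuclideanSpace ℝ (Fin (n + 1)), 0 < X (Fin.last n) → DifferentiableAt ℝ u X)
    (hhom : ∀ X : EuclideanSpace ℝ (Fin (n + 1)), ∀ t : ℝ, 0 < t → u (t • X) = u X)
    (hfin : ∀ R : ℝ, 0 < R → wEnergy n a u R ≠ ⊤) :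
    ∃ C : ℝ, 0 ≤ C ∧ ∃ R₀ : ℝ, 0 < R₀ ∧ ∀ R : ℝ, R₀ ≤ R →
      wEnergy n a (pertFun n φ 1 R u) R + wEnergy n a (pertFun n φ (-1) R u) R
          ≤ 2 * wEnergy n a u R + ENNReal.ofReal (C * R ^ ((n : ℝ) - 3 + a)) ∧
      2 * wEnergy n a u R
          ≤ wEnergy n a (pertFun n φ 1 R u) R + wEnergy n a (pertFun n φ (-1) R u) R
            + ENNReal.ofReal (C * R ^ ((n : ℝ) - 3 + a)) := by
  obtain ⟨K, hK⟩ := ContDiff.lipschitzWith_of_hasCompactSupport hφc hφ (by simp)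
  obtain ⟨Mφ, hMn⟩ := hφc.exists_bound_of_continuous hφ.continuous
  have hM : ∀ x, |φ x| ≤ Mφ := fun x => by
    have := hMn x; rwa [Real.norm_eq_abs] at this
  have hMnn : (0:ℝ) ≤ Mφ := le_trans (abs_nonneg _) (hM 0)
  have hKnn : (0:ℝ) ≤ K := K.coe_nonneg
  rcases Nat.eq_zero_or_pos n with h0 | hpos
  · subst h0
    refine ⟨0, le_rfl, 2*(K:ℝ) + 1, by linarith, ?_⟩
    intro R hR
    have hR0 : (0:ℝ) < R := by linarith
    have h2K : 2*(K:ℝ) ≤ R := by linarith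
    have hA := wEnergy_pert_zero_dim a φ K hK 1 R (by norm_num) h2K hR0 u hhom
    have hB := wEnergy_pert_zero_dim a φ K hK (-1) R (by norm_num) h2K hR0 u hhom
    have hE := wEnergy_zero_dim a u hhom R
    rw [hA, hB, hE]
    constructor
    · exact le_trans (by simp) zero_le
    · simp
  · have hn : n ≠ 0 := by omega
    refine ⟨4*(K:ℝ)^2*(wEnergy n a u 1).toReal,
      by positivity, 4*(K:ℝ) + 4*Mφ + 8, by linarith, ?_⟩
    intro R hR
    exact main_est n hn a ha.1 φ hφ hφ1 hφ0 Mφ hM K hK u hdiff hhom (hfin 1 one_pos) R hR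

end FinalThm
end
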